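/- Associativity of comma is admissible in GwIKt: if Γ[Δ₁, (Δ₂, Δ₃)] ⇒ β is derivable then Γ[(Δ₁, Δ₂), Δ₃] ⇒ β is derivable, and conversely. -/

import Mathlib

/-- Formulas of weak intuitionistic tense logic. -/
inductive Fml : Type
  | var : ℕ → Fml
  | top : Fml
  | bot : Fml
  | imp : Fml → Fml → Fml
  | and : Fml → Fml → Fml
  | or  : Fml → Fml → Fml
  | dia : Fml → Fml   -- ◇ (future diamond)
  | box : Fml → Fml   -- □ (future box)
  | bdia : Fml → Fml  -- ◆ (past diamond)
  | bbox : Fml → Fml  -- ■ (past box)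

/-- Atomic formulas: variables, ⊤, ⊥. -/
def Fml.Atomic : Fml → Prop
  | .var _ => True
  | .top => True
  | .bot => True
  | _ => False

/-- Formula structures: formulas closed under comma, ∘, •. -/
inductive FS : Type
  | fml : Fml → FS
  | comma : FS → FS → FS
  | circ : FS → FS    -- ∘, structural ◇
  | bullet : FS → FS  -- •, structural ◆

/-- Single-hole contexts. -/
inductive Ctx : Type
  | hole : Ctx
  | commaL : Ctx → FS → Ctx
  | commaR : FS → Ctx → Ctx
  | circ : Ctx → Ctx
  | bullet : Ctx → Ctx

/-- Fill the hole of a context with a structure. -/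
def Ctx.plug : Ctx → FS → FS
  | .hole, Δ => Δ
  | .commaL C Γ, Δ => .comma (C.plug Δ) Γ
  | .commaR Γ C, Δ => .comma Γ (C.plug Δ)
  | .circ C, Δ => .circ (C.plug Δ)
  | .bullet C, Δ => .bullet (C.plug Δ)

/-- Multi-hole contexts (for the mix rules Γ[·]ⁿ). -/
inductive MCtx : Type
  | hole : MCtx
  | fml : Fml → MCtx
  | comma : MCtx → MCtx → MCtx
  | circ : MCtx → MCtx
  | bullet : MCtx → MCtx

/-- Fill all holes of a multi-context with the same structure. -/
def MCtx.plug : MCtx → FS → FS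
  | .hole, Δ => Δ
  | .fml α, _ => .fml α
  | .comma C D, Δ => .comma (C.plug Δ) (D.plug Δ)
  | .circ C, Δ => .circ (C.plug Δ)
  | .bullet C, Δ => .bullet (C.plug Δ)

/-- Number n of designated occurrences in Γ[·]ⁿ. -/
def MCtx.holes : MCtx → ℕ
  | .hole => 1
  | .fml _ => 0
  | .comma C D => C.holes + D.holes
  | .circ C => C.holes
  | .bullet C => C.holes

/-- Cut formulas allowed in (Cut_*): not atomic, not □- or ■-formulas, not implications. -/
def Fml.Starish (α : Fml) : Prop :=
  ¬ α.Atomic ∧ (∀ a, α ≠ .box a) ∧ (∀ a, α ≠ .bbox a) ∧ (∀ a b, α ≠ .imp a b)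

/-- Flags selecting the variant of the calculus:
`idFull`: unrestricted identity axiom (Id) vs atomic (Id_A);
`conF`: full formula contraction (Con_F) vs the restricted contractions
(Con_A), (Con_□), (Con_■), (Con_→);
`cut`: the single cut rule (Cut);
`mix`: the four cut-like rules (Mix_A), (Mix_□), (Mix_■), (Mix_→), (Cut_*). -/
structure Rules where
  idFull : Bool
  conF : Bool
  cut : Bool
  mix : Bool

/-- `DerH R n Γ β`: the sequent Γ ⇒ β has a derivation of height at most `n`
in the calculus determined by `R`. -/
inductive DerH (R : Rules) : ℕ → FS → Fml → Prop
  -- (Id_A)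
  | idA (n : ℕ) (α : Fml) : 1 ≤ n → α.Atomic → DerH R n (.fml α) α
  -- (Id), only in calculi with unrestricted identity
  | idF (n : ℕ) (α : Fml) : R.idFull = true → 1 ≤ n → DerH R n (.fml α) α
  -- (⊤)
  | topL (n : ℕ) (Γ : Ctx) (Δ : FS) (β : Fml) :
      DerH R n (Γ.plug (.fml .top)) β → DerH R (n + 1) (Γ.plug Δ) β
  -- (⊥)
  | botL (n : ℕ) (Γ : Ctx) (Δ : FS) (β : Fml) :
      DerH R n Δ .bot → DerH R (n + 1) (Γ.plug Δ) β
  -- (∧L)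
  | andL (n : ℕ) (Γ : Ctx) (α₁ α₂ β : Fml) :
      DerH R n (Γ.plug (.comma (.fml α₁) (.fml α₂))) β →
      DerH R (n + 1) (Γ.plug (.fml (α₁.and α₂))) β
  -- (∧R)
  | andR (n : ℕ) (Γ : FS) (β₁ β₂ : Fml) :
      DerH R n Γ β₁ → DerH R n Γ β₂ → DerH R (n + 1) Γ (β₁.and β₂)
  -- (∨L)
  | orL (n : ℕ) (Γ : Ctx) (α₁ α₂ β : Fml) :
      DerH R n (Γ.plug (.fml α₁)) β → DerH R n (Γ.plug (.fml α₂)) β →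
      DerH R (n + 1) (Γ.plug (.fml (α₁.or α₂))) β
  -- (∨R), i = 1
  | orR₁ (n : ℕ) (Γ : FS) (β₁ β₂ : Fml) :
      DerH R n Γ β₁ → DerH R (n + 1) Γ (β₁.or β₂)
  -- (∨R), i = 2
  | orR₂ (n : ℕ) (Γ : FS) (β₁ β₂ : Fml) :
      DerH R n Γ β₂ → DerH R (n + 1) Γ (β₁.or β₂)
  -- (→L)
  | impL (n : ℕ) (Γ : Ctx) (Δ : FS) (α₁ α₂ β : Fml) :
      DerH R n Δ α₁ → DerH R n (Γ.plug (.fml α₂)) β →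
      DerH R (n + 1) (Γ.plug (.comma Δ (.fml (α₁.imp α₂)))) β
  -- (→R)
  | impR (n : ℕ) (Γ : FS) (β₁ β₂ : Fml) :
      DerH R n (.comma (.fml β₁) Γ) β₂ → DerH R (n + 1) Γ (β₁.imp β₂)
  -- (◇L)
  | diaL (n : ℕ) (Γ : Ctx) (α β : Fml) :
      DerH R n (Γ.plug (.circ (.fml α))) β → DerH R (n + 1) (Γ.plug (.fml (α.dia))) β
  -- (◇R)
  | diaR (n : ℕ) (Γ : FS) (β : Fml) :
      DerH R n Γ β → DerH R (n + 1) (.circ Γ) (β.dia)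
  -- (◆L)
  | bdiaL (n : ℕ) (Γ : Ctx) (α β : Fml) :
      DerH R n (Γ.plug (.bullet (.fml α))) β → DerH R (n + 1) (Γ.plug (.fml (α.bdia))) β
  -- (◆R)
  | bdiaR (n : ℕ) (Γ : FS) (β : Fml) :
      DerH R n Γ β → DerH R (n + 1) (.bullet Γ) (β.bdia)
  -- (■L)
  | bboxL (n : ℕ) (Γ : Ctx) (α β : Fml) :
      DerH R n (Γ.plug (.fml α)) β → DerH R (n + 1) (Γ.plug (.circ (.fml (α.bbox)))) β
  -- (■R)
  | bboxR (n : ℕ) (Γ : FS) (β : Fml) :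
      DerH R n (.circ Γ) β → DerH R (n + 1) Γ (β.bbox)
  -- (□L)
  | boxL (n : ℕ) (Γ : Ctx) (α β : Fml) :
      DerH R n (Γ.plug (.fml α)) β → DerH R (n + 1) (Γ.plug (.bullet (.fml (α.box)))) β
  -- (□R)
  | boxR (n : ℕ) (Γ : FS) (β : Fml) :
      DerH R n (.bullet Γ) β → DerH R (n + 1) Γ (β.box)
  -- (Con∘)
  | conCirc (n : ℕ) (Γ : Ctx) (Δ₁ Δ₂ : FS) (β : Fml) :
      DerH R n (Γ.plug (.comma (.circ Δ₁) (.circ Δ₂))) β →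
      DerH R (n + 1) (Γ.plug (.circ (.comma Δ₁ Δ₂))) β
  -- (Con•)
  | conBullet (n : ℕ) (Γ : Ctx) (Δ₁ Δ₂ : FS) (β : Fml) :
      DerH R n (Γ.plug (.comma (.bullet Δ₁) (.bullet Δ₂))) β →
      DerH R (n + 1) (Γ.plug (.bullet (.comma Δ₁ Δ₂))) β
  -- (Con_F), only with full contraction
  | conF (n : ℕ) (Γ : Ctx) (α β : Fml) : R.conF = true →
      DerH R n (Γ.plug (.comma (.fml α) (.fml α))) β →
      DerH R (n + 1) (Γ.plug (.fml α)) β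
  -- (Con_A), only in the restricted calculi
  | conA (n : ℕ) (Γ : Ctx) (α β : Fml) : R.conF = false → α.Atomic →
      DerH R n (Γ.plug (.comma (.fml α) (.fml α))) β →
      DerH R (n + 1) (Γ.plug (.fml α)) β
  -- (Con_□)
  | conBox (n : ℕ) (Γ : Ctx) (α β : Fml) : R.conF = false →
      DerH R n (Γ.plug (.comma (.fml α.box) (.fml α.box))) β →
      DerH R (n + 1) (Γ.plug (.fml α.box)) β
  -- (Con_■)
  | conBBox (n : ℕ) (Γ : Ctx) (α β : Fml) : R.conF = false →
      DerH R n (Γ.plug (.comma (.fml α.bbox) (.fml α.bbox))) β →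
      DerH R (n + 1) (Γ.plug (.fml α.bbox)) β
  -- (Con_→)
  | conImp (n : ℕ) (Γ : Ctx) (α₁ α₂ β : Fml) : R.conF = false →
      DerH R n (Γ.plug (.comma (.fml (α₁.imp α₂)) (.fml (α₁.imp α₂)))) β →
      DerH R (n + 1) (Γ.plug (.fml (α₁.imp α₂))) β
  -- (Wk), i = 1
  | wk₁ (n : ℕ) (Γ : Ctx) (Δ₁ Δ₂ : FS) (β : Fml) :
      DerH R n (Γ.plug Δ₁) β → DerH R (n + 1) (Γ.plug (.comma Δ₁ Δ₂)) β
  -- (Wk), i = 2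
  | wk₂ (n : ℕ) (Γ : Ctx) (Δ₁ Δ₂ : FS) (β : Fml) :
      DerH R n (Γ.plug Δ₂) β → DerH R (n + 1) (Γ.plug (.comma Δ₁ Δ₂)) β
  -- (Ex)
  | ex (n : ℕ) (Γ : Ctx) (Δ₁ Δ₂ : FS) (β : Fml) :
      DerH R n (Γ.plug (.comma Δ₁ Δ₂)) β → DerH R (n + 1) (Γ.plug (.comma Δ₂ Δ₁)) β
  -- (Dual∘•)
  | dualCB (n : ℕ) (Γ : Ctx) (Δ₁ Δ₂ : FS) (β : Fml) :
      DerH R n (.comma (.circ Δ₁) Δ₂) .bot →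
      DerH R (n + 1) (Γ.plug (.comma Δ₁ (.bullet Δ₂))) β
  -- (Dual•∘)
  | dualBC (n : ℕ) (Γ : Ctx) (Δ₁ Δ₂ : FS) (β : Fml) :
      DerH R n (.comma (.bullet Δ₁) Δ₂) .bot →
      DerH R (n + 1) (Γ.plug (.comma Δ₁ (.circ Δ₂))) β
  -- (Cut)
  | cut (n : ℕ) (Γ : Ctx) (Δ : FS) (α β : Fml) : R.cut = true →
      DerH R n Δ α → DerH R n (Γ.plug (.fml α)) β → DerH R (n + 1) (Γ.plug Δ) β
  -- (Mix_A)
  | mixA (n : ℕ) (Γ : MCtx) (Δ : FS) (α β : Fml) : R.mix = true →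
      α.Atomic → 1 ≤ Γ.holes →
      DerH R n Δ α → DerH R n (Γ.plug (.fml α)) β → DerH R (n + 1) (Γ.plug Δ) β
  -- (Mix_□)
  | mixBox (n : ℕ) (Γ : MCtx) (Δ : FS) (α β : Fml) : R.mix = true →
      1 ≤ Γ.holes →
      DerH R n Δ α.box → DerH R n (Γ.plug (.fml α.box)) β → DerH R (n + 1) (Γ.plug Δ) β
  -- (Mix_■)
  | mixBBox (n : ℕ) (Γ : MCtx) (Δ : FS) (α β : Fml) : R.mix = true →
      1 ≤ Γ.holes →
      DerH R n Δ α.bbox → DerH R n (Γ.plug (.fml α.bbox)) β → DerH R (n + 1) (Γ.plug Δ) β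
  -- (Mix_→)
  | mixImp (n : ℕ) (Γ : MCtx) (Δ : FS) (α₁ α₂ β : Fml) : R.mix = true →
      1 ≤ Γ.holes →
      DerH R n Δ (α₁.imp α₂) → DerH R n (Γ.plug (.fml (α₁.imp α₂))) β →
      DerH R (n + 1) (Γ.plug Δ) β
  -- (Cut_*)
  | cutStar (n : ℕ) (Γ : Ctx) (Δ : FS) (α β : Fml) : R.mix = true →
      α.Starish →
      DerH R n Δ α → DerH R n (Γ.plug (.fml α)) β → DerH R (n + 1) (Γ.plug Δ) β

/-- Derivability (some height). -/
def Der (R : Rules) (Γ : FS) (β : Fml) : Prop := ∃ n, DerH R n Γ β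

/-- GwIKt: full identity, full contraction, with cut. -/
def GwIKt : Rules := ⟨true, true, true, false⟩
/-- GwIKt without the cut rule. -/
def GwIKtCF : Rules := ⟨true, true, false, false⟩
/-- GwIKt† : atomic identity, restricted contractions, with cut. -/
def GwIKtD : Rules := ⟨false, false, true, false⟩
/-- cut-free GwIKt†. -/
def GwIKtDCF : Rules := ⟨false, false, false, false⟩
/-- GwIKt‡ : cut replaced by the four cut-like rules. -/
def GwIKtDD : Rules := ⟨false, false, false, true⟩

/-! In a calculus with cut and the unrestricted identity axiom, a structure Δ and its formula
translation `Δ.toFml` (comma as ∧, ∘ as ◇, • as ◆) are interderivable in every context: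
(∧L), (◇L), (◆L) compile Δ into `Δ.toFml` on the left, while Δ ⇒ `Δ.toFml` holds by (Id),
(Wk), (∧R), (◇R), (◆R). Since ∧ is associative up to weakening, Δ₁, (Δ₂, Δ₃) and
(Δ₁, Δ₂), Δ₃ each derive the translation of the other, and a cut exchanges them. -/

def FS.toFml : FS → Fml
  | .fml α => α
  | .comma Δ₁ Δ₂ => Δ₁.toFml.and Δ₂.toFml
  | .circ Δ => Δ.toFml.dia
  | .bullet Δ => Δ.toFml.bdia

def Ctx.comp : Ctx → Ctx → Ctx
  | .hole, D => D
  | .commaL C Γ, D => .commaL (C.comp D) Γ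
  | .commaR Γ C, D => .commaR Γ (C.comp D)
  | .circ C, D => .circ (C.comp D)
  | .bullet C, D => .bullet (C.comp D)

theorem Ctx.comp_plug (C D : Ctx) (Δ : FS) : (C.comp D).plug Δ = C.plug (D.plug Δ) := by
  induction C <;> simp only [Ctx.comp, Ctx.plug, *]

section

variable {R : Rules}

theorem DerH.one_le {n : ℕ} {Γ : FS} {β : Fml} (h : DerH R n Γ β) : 1 ≤ n := by
  cases h <;> omega

/-- Raising the height bound is a cut against the identity sequent β ⇒ β. -/
theorem DerH.succ (hid : R.idFull = true) (hcut : R.cut = true) {n : ℕ} {Γ : FS} {β : Fml}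
    (h : DerH R n Γ β) : DerH R (n + 1) Γ β :=
  .cut n .hole Γ β β hcut h (.idF n β hid h.one_le)

theorem DerH.mono (hid : R.idFull = true) (hcut : R.cut = true) {n m : ℕ} {Γ : FS} {β : Fml}
    (h : DerH R n Γ β) (hnm : n ≤ m) : DerH R m Γ β := by
  induction hnm with
  | refl => exact h
  | step _ ih => exact ih.succ hid hcut

theorem Der.andR (hid : R.idFull = true) (hcut : R.cut = true) {Γ : FS} {β₁ β₂ : Fml}
    (h₁ : Der R Γ β₁) (h₂ : Der R Γ β₂) : Der R Γ (β₁.and β₂) := by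
  obtain ⟨n₁, h₁⟩ := h₁
  obtain ⟨n₂, h₂⟩ := h₂
  exact ⟨max n₁ n₂ + 1, .andR _ _ _ _ (h₁.mono hid hcut (le_max_left _ _))
    (h₂.mono hid hcut (le_max_right _ _))⟩

theorem Der.cut (hid : R.idFull = true) (hcut : R.cut = true) (Γ : Ctx) {Δ : FS} {α β : Fml}
    (hΔ : Der R Δ α) (hΓ : Der R (Γ.plug (.fml α)) β) : Der R (Γ.plug Δ) β := by
  obtain ⟨n₁, hΔ⟩ := hΔ
  obtain ⟨n₂, hΓ⟩ := hΓ
  exact ⟨max n₁ n₂ + 1, .cut _ Γ Δ α β hcut (hΔ.mono hid hcut (le_max_left _ _))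
    (hΓ.mono hid hcut (le_max_right _ _))⟩

theorem Der.wk₁ {Γ : FS} (Δ : FS) {β : Fml} (h : Der R Γ β) : Der R (.comma Γ Δ) β :=
  let ⟨n, h⟩ := h
  ⟨n + 1, .wk₁ n .hole Γ Δ β h⟩

theorem Der.wk₂ (Δ : FS) {Γ : FS} {β : Fml} (h : Der R Γ β) : Der R (.comma Δ Γ) β :=
  let ⟨n, h⟩ := h
  ⟨n + 1, .wk₂ n .hole Δ Γ β h⟩

theorem Der.toFml_right (hid : R.idFull = true) (hcut : R.cut = true) :
    ∀ Δ : FS, Der R Δ Δ.toFml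
  | .fml α => ⟨1, .idF 1 α hid le_rfl⟩
  | .comma Δ₁ Δ₂ =>
      .andR hid hcut ((toFml_right hid hcut Δ₁).wk₁ Δ₂) ((toFml_right hid hcut Δ₂).wk₂ Δ₁)
  | .circ Δ =>
      let ⟨n, h⟩ := toFml_right hid hcut Δ
      ⟨n + 1, .diaR n Δ _ h⟩
  | .bullet Δ =>
      let ⟨n, h⟩ := toFml_right hid hcut Δ
      ⟨n + 1, .bdiaR n Δ _ h⟩

theorem Der.toFml_left : ∀ (Δ : FS) (Γ : Ctx) {β : Fml},
    Der R (Γ.plug Δ) β → Der R (Γ.plug (.fml Δ.toFml)) β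
  | .fml _, _, _, h => h
  | .comma Δ₁ Δ₂, Γ, β, h => by
      have h₁ := toFml_left Δ₁ (Γ.comp (.commaL .hole Δ₂)) (by rwa [Ctx.comp_plug])
      rw [Ctx.comp_plug] at h₁
      have h₂ := toFml_left Δ₂ (Γ.comp (.commaR (.fml Δ₁.toFml) .hole)) (by rwa [Ctx.comp_plug])
      rw [Ctx.comp_plug] at h₂
      obtain ⟨n, h₂⟩ := h₂
      exact ⟨n + 1, .andL n Γ _ _ β h₂⟩
  | .circ Δ, Γ, β, h => by
      have h₁ := toFml_left Δ (Γ.comp (.circ .hole)) (by rwa [Ctx.comp_plug])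
      rw [Ctx.comp_plug] at h₁
      obtain ⟨n, h₁⟩ := h₁
      exact ⟨n + 1, .diaL n Γ _ β h₁⟩
  | .bullet Δ, Γ, β, h => by
      have h₁ := toFml_left Δ (Γ.comp (.bullet .hole)) (by rwa [Ctx.comp_plug])
      rw [Ctx.comp_plug] at h₁
      obtain ⟨n, h₁⟩ := h₁
      exact ⟨n + 1, .bdiaL n Γ _ β h₁⟩

theorem Der.replace (hid : R.idFull = true) (hcut : R.cut = true) {Γ : Ctx} {Δ Δ' : FS}
    {β : Fml} (h : Der R (Γ.plug Δ) β) (h' : Der R Δ' Δ.toFml) : Der R (Γ.plug Δ') β :=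
  .cut hid hcut Γ h' (toFml_left Δ Γ h)

theorem Der.toFml_assoc_left (hid : R.idFull = true) (hcut : R.cut = true) (Δ₁ Δ₂ Δ₃ : FS) :
    Der R (.comma (.comma Δ₁ Δ₂) Δ₃) (FS.comma Δ₁ (.comma Δ₂ Δ₃)).toFml :=
  .andR hid hcut (((toFml_right hid hcut Δ₁).wk₁ Δ₂).wk₁ Δ₃)
    (.andR hid hcut (((toFml_right hid hcut Δ₂).wk₂ Δ₁).wk₁ Δ₃)
      ((toFml_right hid hcut Δ₃).wk₂ _))

theorem Der.toFml_assoc_right (hid : R.idFull = true) (hcut : R.cut = true) (Δ₁ Δ₂ Δ₃ : FS) :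
    Der R (.comma Δ₁ (.comma Δ₂ Δ₃)) (FS.comma (.comma Δ₁ Δ₂) Δ₃).toFml :=
  .andR hid hcut
    (.andR hid hcut ((toFml_right hid hcut Δ₁).wk₁ _) (((toFml_right hid hcut Δ₂).wk₁ Δ₃).wk₂ Δ₁))
    (((toFml_right hid hcut Δ₃).wk₂ Δ₂).wk₂ Δ₁)

end

/-- associativity of comma is admissible in GwIKt, in both directions. -/
theorem stmt16_assoc_admissible (Γ : Ctx) (Δ₁ Δ₂ Δ₃ : FS) (β : Fml) :
    Der GwIKt (Γ.plug (.comma Δ₁ (.comma Δ₂ Δ₃))) β ↔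
    Der GwIKt (Γ.plug (.comma (.comma Δ₁ Δ₂) Δ₃)) β :=
  ⟨fun h => h.replace rfl rfl (.toFml_assoc_left rfl rfl Δ₁ Δ₂ Δ₃),
    fun h => h.replace rfl rfl (.toFml_assoc_right rfl rfl Δ₁ Δ₂ Δ₃)⟩
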